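/- Fix an integer r ≥ 1 and let a₀, a₁, …, a_r : ℤ → ℝ be the univariate B-spline UEP filters. Then for every k ∈ ℤ, Σ_{α=0}^r Σ_{m∈ℤ} (−1)^m·a_α[m]·a_α[m+k] = 0. (Equivalently, the Fourier series â_α(ξ) = Σ_k a_α[k]e^{−ikξ} satisfy Σ_{α=0}^r â_α(ξ)·conj(â_α(ξ+π)) = 0 for all ξ ∈ ℝ, the second condition of the unitary extension principle.) -/

import Mathlib

noncomputable section

namespace WFrame

/-- convolution of finitely supported sequences on ℤ -/
def fconv (f g : ℤ →₀ ℝ) : ℤ →₀ ℝ :=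
  f.sum fun a c => g.sum fun b d => Finsupp.single (a + b) (c * d)

/-- convolution power; `fpow f 0` is the Dirac delta at 0 -/
def fpow (f : ℤ →₀ ℝ) : ℕ → (ℤ →₀ ℝ)
  | 0 => Finsupp.single 0 1
  | n + 1 => fconv (fpow f n) f

/-- the 1st order average filter p = δ₀ + δ₁ -/
def pF : ℤ →₀ ℝ := Finsupp.single 0 1 + Finsupp.single 1 1

/-- the 1st order difference filter q = δ₀ − δ₁ -/
def qF : ℤ →₀ ℝ := Finsupp.single 0 1 - Finsupp.single 1 1

/-- j_r = 1 if r odd, 0 if r even -/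
def jr (r : ℕ) : ℤ := if r % 2 = 1 then 1 else 0

/-- univariate B-spline UEP filter `a_α`; `aF r α k = a_α[k]`.
`Finsupp.mapDomain (· + jr r)` shifts the sequence: the value of the result at `k` is
the value of the original sequence at `k - jr r`. -/
def aF (r α : ℕ) : ℤ →₀ ℝ :=
  if α = 0 then ((2:ℝ) ^ (-(r:ℤ))) • Finsupp.mapDomain (· + jr r) (fpow pF r)
  else ((-1:ℝ) ^ (α + 1) * (2:ℝ) ^ (-(r:ℤ)) * Real.sqrt (r.choose α)) •
    Finsupp.mapDomain (· + jr r) (fconv (fpow pF (r - α)) (fpow qF α))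

end WFrame

/-!
Identify a finitely supported sequence `f` on `ℤ` with the Laurent polynomial `∑ f[n] Tⁿ` and
let `f ↦ f♯` be the algebra endomorphism `T ↦ -T⁻¹`. The alternating correlation
`∑ₘ (-1)ᵐ f[m] g[m+k]` is the coefficient of `Tᵏ` in `f♯ g`. Since `p = 1 + T` and `q = 1 - T`
satisfy `p♯ = -T⁻¹ q` and `q♯ = T⁻¹ p`, every `a_α♯ a_α` is the common Laurent polynomial
`T⁻ʳ pʳ qʳ` times `4⁻ʳ (-1)^(j_r) (-1)^(r-α) binom(r, α)`, and summing over `α` produces the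
factor `∑_α (-1)^(r-α) binom(r, α) = (1 - 1)ʳ = 0`.
-/

theorem sum_range_neg_one_pow_sub_mul_choose {R : Type*} [CommRing R] {r : ℕ} (hr : r ≠ 0) :
    ∑ α ∈ Finset.range (r + 1), (-1 : R) ^ (r - α) * r.choose α = 0 := by
  simpa [hr] using (add_pow (1 : R) (-1) r).symm

namespace LaurentPolynomial

open AddMonoidAlgebra

theorem ofCoeff_mapDomain_add_right {R : Type*} [Semiring R] (f : ℤ →₀ R) (j : ℤ) :
    (ofCoeff (Finsupp.mapDomain (· + j) f) : R[T;T⁻¹]) = ofCoeff f * T j := by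
  induction f using Finsupp.induction_linear with
  | zero => rw [Finsupp.mapDomain_zero, ofCoeff_zero, zero_mul]
  | add f g hf hg => rw [Finsupp.mapDomain_add, ofCoeff_add, hf, hg, ofCoeff_add, add_mul]
  | single n c => rw [Finsupp.mapDomain_single, ofCoeff_single, ofCoeff_single, T,
      single_mul_single, mul_one]

variable {K : Type*} [Field K]

/-- `f(T) ↦ f(-T⁻¹)` on `K[T;T⁻¹]`. -/
def altInvert : K[T;T⁻¹] →ₐ[K] K[T;T⁻¹] :=
  AddMonoidAlgebra.lift K K[T;T⁻¹] ℤ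
    { toFun := fun n => (-1 : K) ^ n.toAdd • T (-n.toAdd)
      map_one' := by simp
      map_mul' := fun m n => by
        simp only [toAdd_mul, neg_add, T_add, zpow_add₀ (by norm_num : (-1 : K) ≠ 0),
          smul_mul_smul_comm] }

theorem altInvert_single (n : ℤ) (c : K) :
    altInvert (single n c) = single (-n) (c * (-1) ^ n) := by
  rw [altInvert, AddMonoidAlgebra.lift_single, MonoidHom.coe_mk, OneHom.coe_mk, toAdd_ofAdd,
    smul_smul, T, smul_single, smul_eq_mul, mul_one]

theorem altInvert_T (n : ℤ) : altInvert (T n : K[T;T⁻¹]) = (-1 : K) ^ n • T (-n) := by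
  rw [T, altInvert_single, one_mul, T, smul_single, smul_eq_mul, mul_one]

theorem altInvert_one_add_T : altInvert (1 + T 1 : K[T;T⁻¹]) = -T (-1) * (1 - T 1) := by
  rw [map_add, map_one, altInvert_T, zpow_one, neg_one_smul, neg_mul, mul_sub, mul_one,
    ← T_add, neg_add_cancel, T_zero]
  abel

theorem altInvert_one_sub_T : altInvert (1 - T 1 : K[T;T⁻¹]) = T (-1) * (1 + T 1) := by
  rw [map_sub, map_one, altInvert_T, zpow_one, neg_one_smul, mul_add, mul_one, ← T_add,
    neg_add_cancel, T_zero]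
  abel

theorem sum_neg_one_zpow_mul_mul_eq_coeff (f g : ℤ →₀ K) (k : ℤ) :
    ∑ m ∈ f.support, (-1 : K) ^ m * f m * g (m + k) =
      (altInvert (.ofCoeff f) * .ofCoeff g : K[T;T⁻¹]).coeff k := by
  conv_rhs => rw [← f.sum_single, ofCoeff_finsuppSum]
  simp only [Finsupp.sum, map_sum, Finset.sum_mul, coeff_sum,
    Finset.sum_apply', ofCoeff_single, altInvert_single,
    coeff_single_mul_apply, neg_neg]
  exact Finset.sum_congr rfl fun m _ => by ring

theorem altInvert_mul_self_of_pow_mul_pow_mul_T (a b : ℕ) (j : ℤ) :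
    altInvert ((1 + T 1 : K[T;T⁻¹]) ^ a * (1 - T 1) ^ b * T j) *
        ((1 + T 1) ^ a * (1 - T 1) ^ b * T j) =
      ((-1 : K) ^ a * (-1) ^ j) •
        (T (-(a + b : ℤ)) * (1 + T 1) ^ (a + b) * (1 - T 1) ^ (a + b)) := by
  have hj : (T (-j) : K[T;T⁻¹]) * T j = 1 := by rw [← T_add, neg_add_cancel, T_zero]
  have hab : (T (-(a + b : ℤ)) : K[T;T⁻¹]) = T (-1) ^ a * T (-1) ^ b := by
    rw [T_pow, T_pow, ← T_add]; congr 1; ring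
  simp only [map_mul, map_pow, altInvert_one_add_T, altInvert_one_sub_T, altInvert_T, hab,
    mul_pow, neg_pow (T (-1) : K[T;T⁻¹]), smul_eq_C_mul, map_neg, map_one]
  linear_combination ((-1) ^ a * C ((-1 : K) ^ j) * T (-1) ^ a * T (-1) ^ b *
    (1 + T 1) ^ (a + b) * (1 - T 1) ^ (a + b)) * hj

end LaurentPolynomial

namespace WFrame

open LaurentPolynomial AddMonoidAlgebra

theorem ofCoeff_fconv (f g : ℤ →₀ ℝ) :
    (ofCoeff (fconv f g) : ℝ[T;T⁻¹]) = ofCoeff f * ofCoeff g := by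
  rw [mul_def, fconv, ofCoeff_finsuppSum]
  simp only [ofCoeff_finsuppSum, ofCoeff_single]

theorem ofCoeff_fpow (f : ℤ →₀ ℝ) (n : ℕ) :
    (ofCoeff (fpow f n) : ℝ[T;T⁻¹]) = ofCoeff f ^ n := by
  induction n with
  | zero => rfl
  | succ n ih => rw [fpow, ofCoeff_fconv, ih, pow_succ]

theorem ofCoeff_pF : (ofCoeff pF : ℝ[T;T⁻¹]) = 1 + T 1 := rfl

theorem ofCoeff_qF : (ofCoeff qF : ℝ[T;T⁻¹]) = 1 - T 1 := rfl

theorem ofCoeff_aF (r α : ℕ) : ∃ c : ℝ, c ^ 2 = (2 ^ (-(r : ℤ))) ^ 2 * r.choose α ∧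
    (ofCoeff (aF r α) : ℝ[T;T⁻¹]) = c • ((1 + T 1) ^ (r - α) * (1 - T 1) ^ α * T (jr r)) := by
  rcases eq_or_ne α 0 with rfl | hα
  · refine ⟨2 ^ (-(r : ℤ)), by simp, ?_⟩
    rw [aF, if_pos rfl, ofCoeff_smul, ofCoeff_mapDomain_add_right, ofCoeff_fpow, ofCoeff_pF,
      Nat.sub_zero, pow_zero, mul_one]
  · refine ⟨(-1) ^ (α + 1) * 2 ^ (-(r : ℤ)) * √(r.choose α), ?_, ?_⟩
    · rw [mul_pow, mul_pow, ← pow_mul, Even.neg_one_pow ⟨α + 1, by ring⟩, one_mul,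
        Real.sq_sqrt (Nat.cast_nonneg _)]
    · rw [aF, if_neg hα, ofCoeff_smul, ofCoeff_mapDomain_add_right, ofCoeff_fconv, ofCoeff_fpow,
        ofCoeff_fpow, ofCoeff_pF, ofCoeff_qF]

theorem altInvert_ofCoeff_aF_mul_self {r α : ℕ} (hα : α ≤ r) :
    altInvert (ofCoeff (aF r α)) * (ofCoeff (aF r α) : ℝ[T;T⁻¹]) =
      (((2 : ℝ) ^ (-(r : ℤ))) ^ 2 * (-1) ^ jr r * ((-1) ^ (r - α) * r.choose α)) •
        (T (-(r : ℤ)) * (1 + T 1 : ℝ[T;T⁻¹]) ^ r * (1 - T 1) ^ r) := by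
  obtain ⟨c, hc, h⟩ := ofCoeff_aF r α
  rw [h, map_smul, smul_mul_smul_comm, altInvert_mul_self_of_pow_mul_pow_mul_T, smul_smul,
    Nat.sub_add_cancel hα, ← Nat.cast_add, Nat.sub_add_cancel hα, ← sq, hc]
  congr 1
  ring

/-- second UEP condition for the univariate B-spline filters:
Σ_{α=0}^r Σ_{m∈ℤ} (−1)^m·a_α[m]·a_α[m+k] = 0. -/
theorem stmt16 (r : ℕ) (hr : 1 ≤ r) (k : ℤ) :
    (∑ α ∈ Finset.range (r + 1),
        ∑ m ∈ (aF r α).support, (-1 : ℝ) ^ m * aF r α m * aF r α (m + k)) = 0 := by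
  have hsum : ∑ α ∈ Finset.range (r + 1),
      altInvert (ofCoeff (aF r α)) * (ofCoeff (aF r α) : ℝ[T;T⁻¹]) = 0 := by
    rw [Finset.sum_congr rfl fun α hα =>
        altInvert_ofCoeff_aF_mul_self (Finset.mem_range_succ_iff.1 hα),
      ← Finset.sum_smul, ← Finset.mul_sum, sum_range_neg_one_pow_sub_mul_choose (by omega),
      mul_zero, zero_smul]
  simp_rw [sum_neg_one_zpow_mul_mul_eq_coeff, ← Finset.sum_apply', ← coeff_sum, hsum, coeff_zero,
    Finsupp.coe_zero, Pi.zero_apply]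

end WFrame
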